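/- If p(s,t) = (x/w, y/w) parametrizes a family of lines (i.e. for each fixed s, the map t ↦ p(s,t) is a nonconstant affine-linear parametrization of a line), and w is nonvanishing, then at every point (s₀,t₀) where the envelope function h vanishes, the tangent line of the envelope-candidate point set — when p restricted to h = 0 is a regular curve near (s₀,t₀) — coincides with the line of the family through parameter s₀. -/

import Mathlib

open Matrix

lemma env_partial_fst {F : ℝ × ℝ → ℝ} {L : ℝ × ℝ →L[ℝ] ℝ} {s t : ℝ}
    (hF : HasFDerivAt F L (s, t)) :
    HasDerivAt (fun u => F (u, t)) (L (1, 0)) s :=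
  hF.comp_hasDerivAt s ((hasDerivAt_id s).prodMk (hasDerivAt_const s t))

lemma env_partial_snd {F : ℝ × ℝ → ℝ} {L : ℝ × ℝ →L[ℝ] ℝ} {s t : ℝ}
    (hF : HasFDerivAt F L (s, t)) :
    HasDerivAt (fun v => F (s, v)) (L (0, 1)) t :=
  hF.comp_hasDerivAt t ((hasDerivAt_const t s).prodMk (hasDerivAt_id t))

lemma env_clm_eval (L : ℝ × ℝ →L[ℝ] ℝ) (a b : ℝ) :
    L (a, b) = a * L (1, 0) + b * L (0, 1) := by
  have h : ((a, b) : ℝ × ℝ) = a • ((1 : ℝ), (0 : ℝ)) + b • ((0 : ℝ), (1 : ℝ)) := by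
    simp [Prod.ext_iff]
  rw [h, map_add, L.map_smul, L.map_smul, smul_eq_mul, smul_eq_mul]

/-- Tangency property of envelopes of families of lines: if `p = (x/w, y/w)` is a
family of lines (for each `s`, `t ↦ p(s,t)` is a nonconstant affine-linear
parametrization of a line) and `γ` is a regular curve tracing the set
`{p(s,t) : h(s,t) = 0}` through the point `p(s₀,t₀)` with `h(s₀,t₀) = 0`, then the
tangent vector of `γ` there is parallel to the direction of the family line with
parameter `s₀`; hence the tangent line of the envelope coincides with that line. -/
theorem stmt_16 (x y w : ℝ → ℝ → ℝ)
    (hsm : ContDiff ℝ (⊤ : ℕ∞) (fun q : ℝ × ℝ => (x q.1 q.2, y q.1 q.2, w q.1 q.2)))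
    (hw : ∀ s t, w s t ≠ 0)
    (p : ℝ → ℝ → ℝ × ℝ) (hp : ∀ s t, p s t = (x s t / w s t, y s t / w s t))
    (h : ℝ → ℝ → ℝ)
    (hh : ∀ s t, h s t = Matrix.det
      !![x s t, deriv (fun u => x u t) s, deriv (fun v => x s v) t;
         y s t, deriv (fun u => y u t) s, deriv (fun v => y s v) t;
         w s t, deriv (fun u => w u t) s, deriv (fun v => w s v) t])
    (hline : ∀ s, ∃ P v : ℝ × ℝ, v ≠ 0 ∧ ∀ t, p s t = P + t • v)
    (s₀ t₀ : ℝ) (h0 : h s₀ t₀ = 0)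
    (σ τ : ℝ → ℝ) (hσ : DifferentiableAt ℝ σ 0) (hτ : DifferentiableAt ℝ τ 0)
    (hσ0 : σ 0 = s₀) (hτ0 : τ 0 = t₀)
    (henv : ∀ u, h (σ u) (τ u) = 0)
    (γ : ℝ → ℝ × ℝ) (hγ : ∀ u, γ u = p (σ u) (τ u))
    (hreg : deriv γ 0 ≠ 0) :
    ∃ μ : ℝ, deriv γ 0 = μ • deriv (fun t => p s₀ t) t₀ := by
  classical
  -- components as functions on ℝ × ℝ
  set X : ℝ × ℝ → ℝ := fun q => x q.1 q.2 with hXdef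
  set Y : ℝ × ℝ → ℝ := fun q => y q.1 q.2 with hYdef
  set W : ℝ × ℝ → ℝ := fun q => w q.1 q.2 with hWdef
  have hX : ContDiff ℝ (⊤ : ℕ∞) X := contDiff_fst.comp hsm
  have hY : ContDiff ℝ (⊤ : ℕ∞) Y := contDiff_fst.comp (contDiff_snd.comp hsm)
  have hW : ContDiff ℝ (⊤ : ℕ∞) W := contDiff_snd.comp (contDiff_snd.comp hsm)
  -- Fréchet derivatives at (s₀, t₀)
  obtain ⟨LX, hLX⟩ : ∃ L, HasFDerivAt X L (s₀, t₀) :=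
    ⟨_, (hX.differentiable (by simp) (s₀, t₀)).hasFDerivAt⟩
  obtain ⟨LY, hLY⟩ : ∃ L, HasFDerivAt Y L (s₀, t₀) :=
    ⟨_, (hY.differentiable (by simp) (s₀, t₀)).hasFDerivAt⟩
  obtain ⟨LW, hLW⟩ : ∃ L, HasFDerivAt W L (s₀, t₀) :=
    ⟨_, (hW.differentiable (by simp) (s₀, t₀)).hasFDerivAt⟩
  -- abbreviations for values and partials at (s₀, t₀)
  set a := x s₀ t₀ with ha
  set b := y s₀ t₀ with hb
  set c := w s₀ t₀ with hc
  have hc0 : c ≠ 0 := hw s₀ t₀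
  set xs := LX (1, 0) with hxs
  set xt := LX (0, 1) with hxt
  set ys := LY (1, 0) with hys
  set yt := LY (0, 1) with hyt
  set ws := LW (1, 0) with hws
  set wt := LW (0, 1) with hwt
  -- one-variable partial derivatives
  have hXs : HasDerivAt (fun u => x u t₀) xs s₀ := env_partial_fst hLX
  have hXt : HasDerivAt (fun v => x s₀ v) xt t₀ := env_partial_snd hLX
  have hYs : HasDerivAt (fun u => y u t₀) ys s₀ := env_partial_fst hLY
  have hYt : HasDerivAt (fun v => y s₀ v) yt t₀ := env_partial_snd hLY
  have hWs : HasDerivAt (fun u => w u t₀) ws s₀ := env_partial_fst hLW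
  have hWt : HasDerivAt (fun v => w s₀ v) wt t₀ := env_partial_snd hLW
  -- the determinant identity at (s₀, t₀)
  have hdet : a * (ys * wt - yt * ws) - xs * (b * wt - yt * c) +
      xt * (b * ws - ys * c) = 0 := by
    have := h0
    rw [hh s₀ t₀] at this
    simp only [Matrix.det_fin_three, Matrix.cons_val', Matrix.cons_val_zero, Matrix.cons_val_one,
      Matrix.head_cons, Matrix.empty_val', Matrix.cons_val_fin_one, Matrix.head_fin_const,
      Matrix.cons_val_two, Matrix.tail_cons] at this
    rw [hXs.deriv, hXt.deriv, hYs.deriv, hYt.deriv, hWs.deriv, hWt.deriv] at this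
    rw [← ha, ← hb, ← hc] at this
    simp at this
    linear_combination this
  -- the line through parameter s₀
  obtain ⟨P, v, hv0, hPv⟩ := hline s₀
  -- derivative of t ↦ p s₀ t is v
  have hpd : HasDerivAt (fun t => p s₀ t) v t₀ := by
    have : HasDerivAt (fun t : ℝ => P + t • v) v t₀ := by
      simpa [Pi.add_def] using (hasDerivAt_const t₀ P).add ((hasDerivAt_id t₀).smul_const v)
    exact this.congr_of_eventuallyEq (Filter.Eventually.of_forall fun t => hPv t)
  have hpderiv : deriv (fun t => p s₀ t) t₀ = v := hpd.deriv
  -- identify v via quotient rule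
  have hvt1 : HasDerivAt (fun t => x s₀ t / w s₀ t) ((xt * c - a * wt) / c ^ 2) t₀ :=
    hXt.div hWt hc0
  have hvt2 : HasDerivAt (fun t => y s₀ t / w s₀ t) ((yt * c - b * wt) / c ^ 2) t₀ :=
    hYt.div hWt hc0
  have hflin1 : (fun t => x s₀ t / w s₀ t) = fun t => P.1 + t * v.1 := by
    funext t
    have := (hp s₀ t).symm.trans (hPv t)
    have h1 := congrArg Prod.fst this
    simpa using h1
  have hflin2 : (fun t => y s₀ t / w s₀ t) = fun t => P.2 + t * v.2 := by
    funext t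
    have := (hp s₀ t).symm.trans (hPv t)
    have h1 := congrArg Prod.snd this
    simpa using h1
  have hv1lin : HasDerivAt (fun t : ℝ => P.1 + t * v.1) v.1 t₀ := by
    simpa [Pi.add_def] using (hasDerivAt_const t₀ P.1).add ((hasDerivAt_id t₀).mul_const v.1)
  have hv2lin : HasDerivAt (fun t : ℝ => P.2 + t * v.2) v.2 t₀ := by
    simpa [Pi.add_def] using (hasDerivAt_const t₀ P.2).add ((hasDerivAt_id t₀).mul_const v.2)
  have ev1 : (xt * c - a * wt) / c ^ 2 = v.1 := by
    have h1 := hvt1.deriv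
    rw [hflin1, hv1lin.deriv] at h1
    exact h1.symm
  have ev2 : (yt * c - b * wt) / c ^ 2 = v.2 := by
    have h1 := hvt2.deriv
    rw [hflin2, hv2lin.deriv] at h1
    exact h1.symm
  -- derivative of γ at 0 via the chain rule
  set σ' := deriv σ 0 with hσ'
  set τ' := deriv τ 0 with hτ'
  have hcurve : HasDerivAt (fun u => (σ u, τ u)) (σ', τ') 0 :=
    (hσ.hasDerivAt).prodMk (hτ.hasDerivAt)
  have hq0 : (σ 0, τ 0) = (s₀, t₀) := by rw [hσ0, hτ0]
  have hXc : HasDerivAt (fun u => X (σ u, τ u)) (σ' * xs + τ' * xt) 0 := by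
    have := hLX.comp_hasDerivAt_of_eq 0 hcurve hq0.symm
    simpa [Function.comp_def, env_clm_eval LX σ' τ', hxs, hxt] using this
  have hYc : HasDerivAt (fun u => Y (σ u, τ u)) (σ' * ys + τ' * yt) 0 := by
    have := hLY.comp_hasDerivAt_of_eq 0 hcurve hq0.symm
    simpa [Function.comp_def, env_clm_eval LY σ' τ', hys, hyt] using this
  have hWc : HasDerivAt (fun u => W (σ u, τ u)) (σ' * ws + τ' * wt) 0 := by
    have := hLW.comp_hasDerivAt_of_eq 0 hcurve hq0.symm
    simpa [Function.comp_def, env_clm_eval LW σ' τ', hws, hwt] using this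
  have hW0 : W (σ 0, τ 0) ≠ 0 := by rw [hq0]; exact hc0
  have hγ1 : HasDerivAt (fun u => X (σ u, τ u) / W (σ u, τ u))
      (((σ' * xs + τ' * xt) * c - a * (σ' * ws + τ' * wt)) / c ^ 2) 0 := by
    have := hXc.div hWc hW0
    simpa [Pi.div_def, hq0, ha, hc, hXdef, hWdef] using this
  have hγ2 : HasDerivAt (fun u => Y (σ u, τ u) / W (σ u, τ u))
      (((σ' * ys + τ' * yt) * c - b * (σ' * ws + τ' * wt)) / c ^ 2) 0 := by
    have := hYc.div hWc hW0
    simpa [Pi.div_def, hq0, hb, hc, hYdef, hWdef] using this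
  have hγd : HasDerivAt γ
      ((((σ' * xs + τ' * xt) * c - a * (σ' * ws + τ' * wt)) / c ^ 2),
       (((σ' * ys + τ' * yt) * c - b * (σ' * ws + τ' * wt)) / c ^ 2)) 0 := by
    have := hγ1.prodMk hγ2
    refine this.congr_of_eventuallyEq (Filter.Eventually.of_forall fun u => ?_)
    rw [hγ u, hp (σ u) (τ u)]
  have hγderiv : deriv γ 0 =
      ((((σ' * xs + τ' * xt) * c - a * (σ' * ws + τ' * wt)) / c ^ 2),
       (((σ' * ys + τ' * yt) * c - b * (σ' * ws + τ' * wt)) / c ^ 2)) := hγd.deriv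
  -- cross product of the two partials vanishes
  set Ps1 := (xs * c - a * ws) / c ^ 2 with hPs1
  set Ps2 := (ys * c - b * ws) / c ^ 2 with hPs2
  have hcross : Ps1 * v.2 = Ps2 * v.1 := by
    rw [← ev1, ← ev2, hPs1, hPs2]
    field_simp
    linear_combination c * hdet
  -- decompose deriv γ 0 as σ' • Ps + τ' • v
  have hd1 : (deriv γ 0).1 = σ' * Ps1 + τ' * v.1 := by
    rw [hγderiv, ← ev1, hPs1]
    field_simp
    ring
  have hd2 : (deriv γ 0).2 = σ' * Ps2 + τ' * v.2 := by
    rw [hγderiv, ← ev2, hPs2]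
    field_simp
    ring
  rw [hpderiv]
  -- split on which coordinate of v is nonzero
  by_cases hv1 : v.1 ≠ 0
  · refine ⟨σ' * (Ps1 / v.1) + τ', ?_⟩
    have hPs2' : Ps2 = Ps1 * v.2 / v.1 := by
      field_simp
      linarith [hcross]
    apply Prod.ext
    · rw [hd1]; simp only [Prod.smul_fst, smul_eq_mul]; field_simp; try ring
    · rw [hd2, hPs2']; simp only [Prod.smul_snd, smul_eq_mul]; field_simp; try ring
  · push_neg at hv1
    have hv2 : v.2 ≠ 0 := by
      intro hv2
      exact hv0 (Prod.ext hv1 hv2)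
    refine ⟨σ' * (Ps2 / v.2) + τ', ?_⟩
    have hPs1' : Ps1 = Ps2 * v.1 / v.2 := by
      field_simp
      linarith [hcross]
    apply Prod.ext
    · rw [hd1, hPs1']; simp only [Prod.smul_fst, smul_eq_mul]; field_simp; try ring
    · rw [hd2]; simp only [Prod.smul_snd, smul_eq_mul]; field_simp; try ring
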